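/- arXiv:math/0512544 — 2 statements merged into one kernel-verified Lean document; each statement's English description precedes it below -/
import Mathlib

section
/- Let 0 < ε < 1/4 and consider M = 3 with (p_0, p_1, p_2) = (1, 0, 1-ε). Then p_0 + p_1 + p_2 > √3 (so the Hausdorff dimension condition holds), yet the cyclic autocorrelation γ_1 = p_0 p_1 + p_1 p_2 + p_2 p_0 = 1 - ε < 1. -/
theorem palis_counterexample (ε : ℝ) (hε : 0 < ε) (hε' : ε < 1 / 4) :
    Real.sqrt 3 < 1 + 0 + (1 - ε) ∧
    1 * 0 + 0 * (1 - ε) + (1 - ε) * 1 = 1 - ε ∧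
    1 - ε < 1 := by
  refine ⟨?_, by ring, by linarith⟩
  have h : Real.sqrt 3 < 7 / 4 := by
    rw [show (7:ℝ)/4 = Real.sqrt ((7/4)^2) from (Real.sqrt_sq (by norm_num)).symm]
    exact Real.sqrt_lt_sqrt (by norm_num) (by norm_num)
  linarith
end

section
/- Given m ≥ 3 distinct odd natural numbers o_1, …, o_m and m distinct even natural numbers e_1, …, e_m, there exists a permutation π of {1, …, m} such that |e_k - o_{π(k)}| > 1 for every k, i.e., no paired even and odd number are adjacent integers. -/
/-!
Call an even `e` and an odd `o` adjacent when `|e - o| = 1`. Every number is adjacent to at most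
two numbers of the other parity, and two distinct evens have at most one common odd neighbour
(the midpoint, when they differ by `2`). With `m ≥ 3` these bounds give Hall's condition for
the non-adjacency relation: a set of one or two evens is non-adjacent to at least `m - 2 ≥ 1`,
resp. `m - 1 ≥ 2`, odds, and three evens cannot all be adjacent to the same odd.
-/

open Finset Function

section Hall

variable {ι κ : Type*} [Fintype ι] [Fintype κ] (r : ι → κ → Prop) [DecidableRel r]

theorem card_add_card_filter_forall_rel_le (hcard : Fintype.card ι ≤ Fintype.card κ)
    (hκ : 3 ≤ Fintype.card κ) (hrow : ∀ i, #{j | r i j} ≤ 2)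
    (hcol : ∀ j, #{i | r i j} ≤ 2)
    (hpair : ∀ i i', i ≠ i' → #{j | r i j ∧ r i' j} ≤ 1) (s : Finset ι) :
    #s + #{j | ∀ i ∈ s, r i j} ≤ Fintype.card κ := by
  obtain hs | hs | hs | hs : #s = 0 ∨ #s = 1 ∨ #s = 2 ∨ 3 ≤ #s := by omega
  · simpa [hs] using card_le_univ _
  · obtain ⟨i, rfl⟩ := card_eq_one.mp hs
    have := hrow i
    simp only [card_singleton, mem_singleton, forall_eq]
    omega
  · classical
    obtain ⟨i, i', hii', rfl⟩ := card_eq_two.mp hs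
    have := hpair i i' hii'
    simp only [hs, mem_insert, mem_singleton, forall_eq_or_imp, forall_eq]
    omega
  · have hempty : ({j | ∀ i ∈ s, r i j} : Finset κ) = ∅ := by
      refine filter_eq_empty_iff.mpr fun j _ hj => ?_
      have : s ⊆ ({i | r i j} : Finset ι) := fun i hi => mem_filter.mpr ⟨mem_univ i, hj i hi⟩
      have := card_le_card this
      have := hcol j
      omega
    rw [hempty, card_empty, add_zero]
    exact (card_le_univ s).trans hcard

theorem exists_injective_forall_not_rel (hcard : Fintype.card ι ≤ Fintype.card κ)
    (hκ : 3 ≤ Fintype.card κ) (hrow : ∀ i, #{j | r i j} ≤ 2)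
    (hcol : ∀ j, #{i | r i j} ≤ 2)
    (hpair : ∀ i i', i ≠ i' → #{j | r i j ∧ r i' j} ≤ 1) :
    ∃ f : ι → κ, Injective f ∧ ∀ i, ¬ r i (f i) := by
  refine (Fintype.all_card_le_filter_rel_iff_exists_injective fun i j => ¬ r i j).mp fun s => ?_
  have hsplit :=
    card_filter_add_card_filter_not (s := (univ : Finset κ)) (fun j => ∀ i ∈ s, r i j)
  simp only [not_forall, exists_prop, card_univ] at hsplit
  have := card_add_card_filter_forall_rel_le r hcard hκ hrow hcol hpair s
  omega

end Hall

section Adjacent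

variable {ι : Type*} [Fintype ι] {f : ι → ℤ}

theorem card_filter_abs_sub_le_one_le_two (hf : Injective f) {n : ℤ} (hn : ∀ i, f i ≠ n) :
    #{i | |n - f i| ≤ 1} ≤ 2 := by
  calc #{i | |n - f i| ≤ 1} ≤ #({n - 1, n + 1} : Finset ℤ) := by
        refine card_le_card_of_injOn f (fun i hi => ?_) hf.injOn
        have := hn i
        simp only [coe_filter, mem_univ, true_and, Set.mem_ofPred_eq, abs_le] at hi
        simp only [coe_insert, coe_singleton, Set.mem_insert_iff, Set.mem_singleton_iff]
        omega
    _ ≤ 2 := card_le_two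

theorem card_filter_abs_sub_le_one_and_le_one (hf : Injective f) {a b : ℤ} (hab : a ≠ b)
    (ha : ∀ i, f i ≠ a) (hb : ∀ i, f i ≠ b) :
    #{i | |a - f i| ≤ 1 ∧ |b - f i| ≤ 1} ≤ 1 := by
  calc #{i | |a - f i| ≤ 1 ∧ |b - f i| ≤ 1} ≤ #({(a + b) / 2} : Finset ℤ) := by
        refine card_le_card_of_injOn f (fun i hi => ?_) hf.injOn
        have := ha i
        have := hb i
        simp only [coe_filter, mem_univ, true_and, Set.mem_ofPred_eq, abs_le] at hi
        simp only [coe_singleton, Set.mem_singleton_iff]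
        omega
    _ = 1 := card_singleton _

end Adjacent

theorem delta_pairing (m : ℕ) (hm : 3 ≤ m)
    (o e : Fin m → ℕ) (ho : Function.Injective o) (he : Function.Injective e)
    (hodd : ∀ k, Odd (o k)) (heven : ∀ k, Even (e k)) :
    ∃ π : Equiv.Perm (Fin m), ∀ k : Fin m, 1 < |(e k : ℤ) - (o (π k) : ℤ)| := by
  have ho' : Injective fun j => (o j : ℤ) := Nat.cast_injective.comp ho
  have he' : Injective fun k => (e k : ℤ) := Nat.cast_injective.comp he
  have hne : ∀ j k, (o j : ℤ) ≠ e k := fun j k h =>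
    Nat.not_even_iff_odd.mpr (hodd j) (Nat.cast_injective h ▸ heven k)
  obtain ⟨π, hπ, hfar⟩ := exists_injective_forall_not_rel
    (fun k j => |(e k : ℤ) - o j| ≤ 1) le_rfl (by simpa using hm)
    (fun k => card_filter_abs_sub_le_one_le_two ho' (hne · k))
    (fun j => by
      simpa only [abs_sub_comm] using
        card_filter_abs_sub_le_one_le_two he' fun k => (hne j k).symm)
    (fun k k' hkk' => card_filter_abs_sub_le_one_and_le_one ho'
      (fun h => hkk' (he' h)) (hne · k) (hne · k'))
  exact ⟨Equiv.ofBijective π (Finite.injective_iff_bijective.mp hπ),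
    fun k => not_le.mp (hfar k)⟩
end
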